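/- arXiv:1007.2664 — 4 statements merged into one kernel-verified Lean document; each statement's English description precedes it below -/
import Mathlib

section
/- Let (τ_k)_{k≥1} be i.i.d. strictly positive random variables with finite mean μ = E(τ₁) (the variance may be infinite). Let S₀ ≥ 0 be fixed, S_k = S₀ + τ₁ + ⋯ + τ_k, and N_t = Σ_{k≥1} 1(S_k ≤ t). Then N_t/t converges to 1/μ in L², i.e. lim_{t→∞} E((N_t/t − 1/μ)²) = 0. -/
/-!
By the strong law of large numbers `S_k / k → μ` almost surely, and since `N_t` is the inverse of
the nondecreasing sequence `S`, also `N_t / t → 1 / μ` almost surely. Convergence in `L²` then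
follows from a bound on `E (N_t / t)⁴` that is uniform in `t ≥ 1`. As `N_t ≥ k` forces the first
`k` inter-arrival times to sum to at most `t`, the Chernoff bound with `φ = E e^{-τ} < 1` gives
`P (N_t ≥ k) ≤ e^t φ^k`; this is an exponential tail for `N_t / t`, uniform in `t ≥ 1`, and the
layer-cake formula turns it into the moment bound.
-/

open MeasureTheory ProbabilityTheory Filter
open Real Topology Finset
open scoped ENNReal

-- When infinitely many indices qualify, `Set.ncard` returns the junk value `0`.
noncomputable def arrivalCount (s : ℕ → ℝ) (t : ℝ) : ℕ := {k : ℕ | 1 ≤ k ∧ s k ≤ t}.ncard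

namespace arrivalCount

variable {s : ℕ → ℝ} {t : ℝ} {k : ℕ}

theorem le_of_le (hs : Monotone s) (hk : 1 ≤ k) (h : k ≤ arrivalCount s t) : s k ≤ t := by
  by_contra! hlt
  have hsub : {j : ℕ | 1 ≤ j ∧ s j ≤ t} ⊆ Set.Ico 1 k := fun j ⟨hj, hjt⟩ =>
    ⟨hj, lt_of_not_ge fun hkj => (hlt.trans_le (hs hkj)).not_ge hjt⟩
  have := Set.ncard_le_ncard hsub (Set.finite_Ico 1 k)
  rw [← Finset.coe_Ico, Set.ncard_coe_finset, Nat.card_Ico] at this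
  unfold arrivalCount at h
  omega

theorem le_iff (hs : Monotone s) (hs_top : Tendsto s atTop atTop) (hk : 1 ≤ k) :
    k ≤ arrivalCount s t ↔ s k ≤ t := by
  refine ⟨le_of_le hs hk, fun hkt => ?_⟩
  obtain ⟨K, hK⟩ := (hs_top.eventually_gt_atTop t).exists_forall_of_atTop
  have hfin : {j : ℕ | 1 ≤ j ∧ s j ≤ t}.Finite :=
    (Set.finite_Iio K).subset fun j ⟨_, hjt⟩ => lt_of_not_ge fun hKj => (hK j hKj).not_ge hjt
  have hsub : Set.Icc 1 k ⊆ {j : ℕ | 1 ≤ j ∧ s j ≤ t} := fun j ⟨hj, hjk⟩ =>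
    ⟨hj, (hs hjk).trans hkt⟩
  have := Set.ncard_le_ncard hsub hfin
  rwa [← Finset.coe_Icc, Set.ncard_coe_finset, Nat.card_Icc, Nat.add_sub_cancel] at this

/-- With `n = arrivalCount s t` one has `s n ≤ t < s (n + 1)`, so `t / n` is squeezed between
two sequences tending to `μ`. -/
theorem tendsto_div (hs : Monotone s) {μ : ℝ} (hμ : 0 < μ)
    (h : Tendsto (fun k : ℕ => s k / k) atTop (𝓝 μ)) :
    Tendsto (fun t => (arrivalCount s t : ℝ) / t) atTop (𝓝 μ⁻¹) := by
  have hs_top : Tendsto s atTop atTop :=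
    (h.pos_mul_atTop hμ tendsto_natCast_atTop_atTop).congr' <|
      (eventually_ge_atTop 1).mono fun k hk => div_mul_cancel₀ _ (by positivity)
  set n := arrivalCount s
  have hn_top : Tendsto n atTop atTop := tendsto_atTop.2 fun m =>
    (eventually_ge_atTop (s (max m 1))).mono fun t ht =>
      (le_max_left m 1).trans ((le_iff hs hs_top (le_max_right m 1)).2 ht)
  have hn_pos : ∀ᶠ t in atTop, (0 : ℝ) < n t :=
    (hn_top.eventually_ge_atTop 1).mono fun t ht => by exact_mod_cast ht
  have hlower : ∀ᶠ t in atTop, s (n t) / n t ≤ t / n t := by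
    filter_upwards [hn_top.eventually_ge_atTop 1, hn_pos] with t ht htpos
    gcongr
    exact (le_iff hs hs_top ht).1 le_rfl
  have hupper : ∀ᶠ t in atTop, t / n t ≤ s (n t + 1) / (n t + 1 : ℕ) * (1 + 1 / n t) := by
    filter_upwards [hn_pos] with t htpos
    have hlt : t < s (n t + 1) := not_le.1 fun h' =>
      (le_iff hs hs_top (Nat.le_add_left 1 _)).2 h' |>.not_gt (Nat.lt_succ_self _)
    calc t / n t ≤ s (n t + 1) / n t := by gcongr
      _ = _ := by field_simp; push_cast; ring
  have hratio : Tendsto (fun t => 1 + 1 / (n t : ℝ)) atTop (𝓝 (1 + 0)) :=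
    tendsto_const_nhds.add (tendsto_one_div_atTop_nhds_zero_nat.comp hn_top)
  have hlim : Tendsto (fun t => t / n t) atTop (𝓝 μ) := by
    refine tendsto_of_tendsto_of_tendsto_of_le_of_le' (h.comp hn_top) ?_ hlower hupper
    simpa using (h.comp ((tendsto_add_atTop_nat 1).comp hn_top)).mul hratio
  simpa using hlim.inv₀ hμ.ne'

end arrivalCount

theorem Set.ncard_eq_toReal_encard {α : Type*} (s : Set α) :
    (s.ncard : ℝ) = (s.encard : ℝ≥0∞).toReal := by
  rcases s.finite_or_infinite with hs | hs
  · rw [← hs.cast_ncard_eq]; simp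
  · simp [hs.ncard, hs.encard_eq]

open Classical in
theorem measurable_ncard_setOf {Ω : Type*} [MeasurableSpace Ω] {p : ℕ → Ω → Prop}
    (hp : ∀ k, MeasurableSet {ω | p k ω}) : Measurable fun ω => ({k | p k ω}.ncard : ℝ) := by
  have h : ∀ ω, ({k | p k ω}.ncard : ℝ) = (∑' k, if p k ω then (1 : ℝ≥0∞) else 0).toReal :=
    fun ω => by
      rw [Set.ncard_eq_toReal_encard, ← ENNReal.tsum_set_one,
        _root_.tsum_subtype _ fun _ => (1 : ℝ≥0∞)]
      rfl
  simp_rw [h]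
  exact (Measurable.tsum fun k =>
    Measurable.ite (hp k) measurable_const measurable_const).ennreal_toReal

theorem integral_rpow_le_of_measure_lt_le_exp {α : Type*} [MeasurableSpace α] {μ : Measure α}
    {f : α → ℝ} (hf0 : 0 ≤ᵐ[μ] f) (hf : AEMeasurable f μ) {p a C : ℝ} (hp : 0 < p) (ha : 0 < a)
    (hC : 0 ≤ C) (htail : ∀ x > 0, μ {ω | x < f ω} ≤ ENNReal.ofReal (C * exp (-(a * x)))) :
    Integrable (fun ω => f ω ^ p) μ ∧ ∫ ω, f ω ^ p ∂μ ≤ p * C * ((1 / a) ^ p * Gamma p) := by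
  have hgamma := integral_rpow_mul_exp_neg_mul_Ioi hp ha
  have hg : IntegrableOn (fun x => x ^ (p - 1) * exp (-(a * x))) (Set.Ioi 0) :=
    Integrable.of_integral_ne_zero (by rw [hgamma]; positivity)
  have hlint : ∫⁻ ω, ENNReal.ofReal (f ω ^ p) ∂μ ≤
      ENNReal.ofReal (p * C * ((1 / a) ^ p * Gamma p)) := by
    rw [lintegral_rpow_eq_lintegral_meas_lt_mul μ hf0 hf hp]
    calc ENNReal.ofReal p *
          ∫⁻ x in Set.Ioi (0 : ℝ), μ {ω | x < f ω} * ENNReal.ofReal (x ^ (p - 1))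
        ≤ ENNReal.ofReal p *
          ∫⁻ x in Set.Ioi (0 : ℝ), ENNReal.ofReal (C * (x ^ (p - 1) * exp (-(a * x)))) := by
          gcongr ENNReal.ofReal p * ?_
          refine setLIntegral_mono' measurableSet_Ioi fun x hx => ?_
          rw [mul_left_comm, ENNReal.ofReal_mul (rpow_nonneg (Set.mem_Ioi.1 hx).le _), mul_comm]
          gcongr
          exact htail x hx
      _ = ENNReal.ofReal p *
          ENNReal.ofReal (∫ x in Set.Ioi (0 : ℝ), C * (x ^ (p - 1) * exp (-(a * x)))) := by
          rw [ofReal_integral_eq_lintegral_ofReal (hg.const_mul C)]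
          filter_upwards [ae_restrict_mem measurableSet_Ioi] with x hx
          exact mul_nonneg hC (mul_nonneg (rpow_nonneg (Set.mem_Ioi.1 hx).le _) (exp_pos _).le)
      _ = ENNReal.ofReal (p * C * ((1 / a) ^ p * Gamma p)) := by
          rw [integral_const_mul, hgamma, ← ENNReal.ofReal_mul hp.le, mul_assoc]
  have hfp0 : 0 ≤ᵐ[μ] fun ω => f ω ^ p := hf0.mono fun ω hω => rpow_nonneg hω p
  have hfp : AEStronglyMeasurable (fun ω => f ω ^ p) μ := (hf.pow_const p).aestronglyMeasurable
  refine ⟨(lintegral_ofReal_ne_top_iff_integrable hfp hfp0).1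
    (ne_top_of_le_ne_top ENNReal.ofReal_ne_top hlint), ?_⟩
  rw [integral_eq_lintegral_of_nonneg_ae hfp0 hfp]
  exact ENNReal.toReal_le_of_le_ofReal (by positivity) hlint

theorem le_min_add_sq_div (x : ℝ) {K : ℝ} (hK : 0 < K) : x ≤ min x K + x ^ 2 / K := by
  rcases le_total x K with h | h
  · rw [min_eq_left h]
    have : 0 ≤ x ^ 2 / K := by positivity
    linarith
  · rw [min_eq_right h, ← sub_le_iff_le_add', le_div_iff₀ hK]
    nlinarith [sq_nonneg (x - K)]

section Probability

variable {Ω : Type*} [MeasurableSpace Ω] {P : Measure Ω}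

theorem integral_pos_of_ae_pos [NeZero P] {f : Ω → ℝ} (hf : Integrable f P)
    (hpos : ∀ᵐ ω ∂P, 0 < f ω) : 0 < ∫ ω, f ω ∂P := by
  rw [integral_pos_iff_support_of_nonneg_ae (hpos.mono fun ω hω => hω.le) hf]
  refine pos_iff_ne_zero.2 fun h0 => ?_
  obtain ⟨ω, hω, hω'⟩ := (hpos.and (measure_eq_zero_iff_ae_notMem.1 h0)).exists
  exact hω' hω.ne'

theorem integrable_exp_neg_mul_of_nonneg [IsFiniteMeasure P] {X : Ω → ℝ} (hX : AEMeasurable X P)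
    (hnonneg : ∀ᵐ ω ∂P, 0 ≤ X ω) : Integrable (fun ω => exp (-1 * X ω)) P := by
  simpa using
    integrable_exp_mul_of_le 1 0 zero_le_one hX.neg (hnonneg.mono fun ω h => neg_nonpos.2 h)

theorem mgf_neg_one_lt_one [IsProbabilityMeasure P] {X : Ω → ℝ} (hX : AEMeasurable X P)
    (hpos : ∀ᵐ ω ∂P, 0 < X ω) : mgf X P (-1) < 1 := by
  have hint := integrable_exp_neg_mul_of_nonneg hX (hpos.mono fun ω hω => hω.le)
  have hgap : 0 < ∫ ω, (1 - exp (-1 * X ω)) ∂P :=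
    integral_pos_of_ae_pos ((integrable_const 1).sub hint) (hpos.mono fun ω hω => by simpa using hω)
  rw [integral_sub (integrable_const 1) hint] at hgap
  simp only [integral_const, probReal_univ, one_smul, sub_pos] at hgap
  exact hgap

theorem measureReal_sum_range_le_le [IsProbabilityMeasure P] {X : ℕ → Ω → ℝ}
    (hmeas : ∀ i, Measurable (X i)) (hindep : iIndepFun X P)
    (hident : ∀ i, IdentDistrib (X i) (X 0) P P) (hnonneg : ∀ i, ∀ᵐ ω ∂P, 0 ≤ X i ω)
    (t : ℝ) (k : ℕ) :
    P.real {ω | ∑ i ∈ range k, X i ω ≤ t} ≤ exp t * mgf (X 0) P (-1) ^ k := by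
  have hsum_nonneg : ∀ᵐ ω ∂P, 0 ≤ (∑ i ∈ range k, X i) ω := by
    filter_upwards [ae_all_iff.2 hnonneg] with ω hω
    simpa only [Finset.sum_apply] using Finset.sum_nonneg fun i _ => hω i
  calc P.real {ω | ∑ i ∈ range k, X i ω ≤ t}
      = P.real {ω | (∑ i ∈ range k, X i) ω ≤ t} := by simp only [Finset.sum_apply]
    _ ≤ exp (- -1 * t) * mgf (∑ i ∈ range k, X i) P (-1) :=
      measure_le_le_exp_mul_mgf t (by norm_num) <|
        integrable_exp_neg_mul_of_nonneg (by fun_prop) hsum_nonneg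
    _ = exp t * mgf (X 0) P (-1) ^ k := by
      rw [hindep.mgf_sum hmeas, Finset.prod_congr rfl fun i _ => by
        rw [mgf_congr_identDistrib (hident i)], prod_const, card_range, neg_neg, one_mul]

/-- Bounded second moments make the family uniformly integrable: by `le_min_add_sq_div`, the part
of `∫ f i` above the level `K` is at most `C / K`, and the truncations converge by dominated
convergence. -/
theorem tendsto_integral_of_tendsto_ae_of_integral_sq_le [IsFiniteMeasure P] {ι : Type*}
    {l : Filter ι} [l.IsCountablyGenerated] {f : ι → Ω → ℝ} {C : ℝ}
    (hmeas : ∀ᶠ i in l, AEStronglyMeasurable (f i) P) (hnonneg : ∀ᶠ i in l, 0 ≤ᵐ[P] f i)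
    (hint : ∀ᶠ i in l, Integrable (fun ω => f i ω ^ 2) P)
    (hbdd : ∀ᶠ i in l, ∫ ω, f i ω ^ 2 ∂P ≤ C)
    (hlim : ∀ᵐ ω ∂P, Tendsto (fun i => f i ω) l (𝓝 0)) :
    Tendsto (fun i => ∫ ω, f i ω ∂P) l (𝓝 0) := by
  have hfint : ∀ᶠ i in l, Integrable (f i) P := by
    filter_upwards [hmeas, hint] with i hm hi
    refine ((integrable_const 1).add hi).mono' hm (ae_of_all _ fun ω => ?_)
    show |f i ω| ≤ 1 + f i ω ^ 2
    nlinarith [abs_nonneg (f i ω), sq_abs (f i ω)]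
  refine tendsto_order.2 ⟨fun a ha => ?_, fun b hb => ?_⟩
  · filter_upwards [hnonneg] with i hi using ha.trans_le (integral_nonneg_of_ae hi)
  obtain ⟨n, hn, hn_pos⟩ := (((tendsto_const_div_atTop_nhds_zero_nat C).eventually
    (gt_mem_nhds (half_pos hb))).and (eventually_gt_atTop 0)).exists
  set K : ℝ := (n : ℝ)
  have hK : 0 < K := Nat.cast_pos.2 hn_pos
  have hmin_le : ∀ i, 0 ≤ᵐ[P] f i → ∀ᵐ ω ∂P, ‖min (f i ω) K‖ ≤ min (f i ω) K := fun i hi =>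
    hi.mono fun ω hω => by rw [Real.norm_eq_abs, abs_of_nonneg (le_min hω hK.le)]
  have htrunc : Tendsto (fun i => ∫ ω, min (f i ω) K ∂P) l (𝓝 0) := by
    have := tendsto_integral_filter_of_dominated_convergence (μ := P) (fun _ => K)
      (hmeas.mono fun i hm => (hm.aemeasurable.min aemeasurable_const).aestronglyMeasurable)
      (hnonneg.mono fun i hi => (hmin_le i hi).mono fun ω hω => hω.trans (min_le_right _ _))
      (integrable_const K) (hlim.mono fun ω hω => hω.min tendsto_const_nhds)
    simpa [min_eq_left hK.le] using this
  filter_upwards [htrunc.eventually (gt_mem_nhds (half_pos hb)), hfint, hint, hbdd, hmeas,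
    hnonneg] with i hi hfi hi2 hC hm hnn
  have hmin : Integrable (fun ω => min (f i ω) K) P :=
    hfi.mono' (hm.aemeasurable.min aemeasurable_const).aestronglyMeasurable
      ((hmin_le i hnn).mono fun ω hω => hω.trans (min_le_left _ _))
  calc ∫ ω, f i ω ∂P ≤ ∫ ω, (min (f i ω) K + f i ω ^ 2 / K) ∂P :=
        integral_mono hfi (hmin.add (hi2.div_const K)) fun ω => le_min_add_sq_div _ hK
    _ = ∫ ω, min (f i ω) K ∂P + (∫ ω, f i ω ^ 2 ∂P) / K := by
        rw [integral_add hmin (hi2.div_const K), integral_div]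
    _ < b / 2 + b / 2 := add_lt_add hi ((div_le_div_of_nonneg_right hC hK.le).trans_lt hn)
    _ = b := add_halves b

theorem tendsto_integral_sub_sq_of_integral_pow_four_le [IsProbabilityMeasure P] {ι : Type*}
    {l : Filter ι} [l.IsCountablyGenerated] {g : ι → Ω → ℝ} {c M : ℝ}
    (hmeas : ∀ᶠ i in l, AEStronglyMeasurable (g i) P)
    (hint : ∀ᶠ i in l, Integrable (fun ω => g i ω ^ 4) P)
    (hbdd : ∀ᶠ i in l, ∫ ω, g i ω ^ 4 ∂P ≤ M)
    (hlim : ∀ᵐ ω ∂P, Tendsto (fun i => g i ω) l (𝓝 c)) :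
    Tendsto (fun i => ∫ ω, (g i ω - c) ^ 2 ∂P) l (𝓝 0) := by
  have hquartic : ∀ x, ((x - c) ^ 2) ^ 2 ≤ 8 * x ^ 4 + 8 * c ^ 4 := fun x => by
    nlinarith [sq_nonneg (x + c), sq_nonneg (x ^ 2 - c ^ 2), sq_nonneg (x ^ 2 + c ^ 2)]
  have hdom : ∀ᶠ i in l, Integrable (fun ω => 8 * g i ω ^ 4 + 8 * c ^ 4) P :=
    hint.mono fun i hi => (hi.const_mul 8).add (integrable_const _)
  have hmeas' : ∀ᶠ i in l, AEStronglyMeasurable (fun ω => (g i ω - c) ^ 2) P :=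
    hmeas.mono fun i hm => (hm.sub aestronglyMeasurable_const).pow 2
  have hint' : ∀ᶠ i in l, Integrable (fun ω => ((g i ω - c) ^ 2) ^ 2) P := by
    filter_upwards [hdom, hmeas'] with i hi hm
    refine hi.mono' (hm.pow 2) (ae_of_all _ fun ω => ?_)
    rw [Real.norm_eq_abs, abs_of_nonneg (by positivity)]
    exact hquartic _
  refine tendsto_integral_of_tendsto_ae_of_integral_sq_le (C := 8 * M + 8 * c ^ 4) hmeas'
    (Eventually.of_forall fun i => ae_of_all _ fun ω => sq_nonneg _) hint' ?_ ?_
  · filter_upwards [hdom, hint', hint, hbdd] with i hi hi' hg hM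
    calc ∫ ω, ((g i ω - c) ^ 2) ^ 2 ∂P ≤ ∫ ω, (8 * g i ω ^ 4 + 8 * c ^ 4) ∂P :=
          integral_mono hi' hi fun ω => hquartic _
      _ ≤ 8 * M + 8 * c ^ 4 := by
          rw [integral_add (hg.const_mul 8) (integrable_const _), integral_const_mul]
          simp only [integral_const, probReal_univ, one_smul]
          linarith
  · filter_upwards [hlim] with ω hω
    simpa using (hω.sub_const c).pow 2

end Probability

noncomputable def renewalCount {Ω : Type*} (S₀ : ℝ) (X : ℕ → Ω → ℝ) (t : ℝ) (ω : Ω) : ℕ :=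
  arrivalCount (fun k => S₀ + ∑ i ∈ range k, X i ω) t

section Renewal

variable {Ω : Type*} [MeasurableSpace Ω] {P : Measure Ω} [IsProbabilityMeasure P]
  {X : ℕ → Ω → ℝ} {S₀ : ℝ}

theorem monotone_const_add_sum_range {x : ℕ → ℝ} (hx : ∀ i, 0 ≤ x i) (c : ℝ) :
    Monotone fun k => c + ∑ i ∈ range k, x i :=
  ((sum_mono_set_of_nonneg hx).comp range_mono).const_add c

theorem measurable_renewalCount (hmeas : ∀ i, Measurable (X i)) (t : ℝ) :
    Measurable fun ω => (renewalCount S₀ X t ω : ℝ) :=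
  measurable_ncard_setOf fun k => by measurability

theorem measure_le_renewalCount_le (hmeas : ∀ i, Measurable (X i)) (hindep : iIndepFun X P)
    (hident : ∀ i, IdentDistrib (X i) (X 0) P P) (hnonneg : ∀ i, ∀ᵐ ω ∂P, 0 ≤ X i ω)
    (hS₀ : 0 ≤ S₀) (t : ℝ) {k : ℕ} (hk : 1 ≤ k) :
    P {ω | k ≤ renewalCount S₀ X t ω} ≤ ENNReal.ofReal (exp t * mgf (X 0) P (-1) ^ k) := by
  calc P {ω | k ≤ renewalCount S₀ X t ω}
      ≤ P {ω | ∑ i ∈ range k, X i ω ≤ t} := by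
        refine measure_mono_ae ?_
        filter_upwards [ae_all_iff.2 hnonneg] with ω hω hkN
        have := arrivalCount.le_of_le (monotone_const_add_sum_range hω S₀) hk hkN
        exact (le_add_of_nonneg_left hS₀).trans this
    _ = ENNReal.ofReal (P.real {ω | ∑ i ∈ range k, X i ω ≤ t}) := (ofReal_measureReal).symm
    _ ≤ _ := ENNReal.ofReal_le_ofReal (measureReal_sum_range_le_le hmeas hindep hident hnonneg t k)

/-- Chernoff gives the bound `e^{t (1 - a x)}`, which is at most `e^{1 - a x}` once `a x ≥ 1`;
for smaller `x` the trivial bound `1` is at most `e^{1 - a x}`. -/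
theorem measure_lt_renewalCount_div_le (hmeas : ∀ i, Measurable (X i)) (hindep : iIndepFun X P)
    (hident : ∀ i, IdentDistrib (X i) (X 0) P P) (hnonneg : ∀ i, ∀ᵐ ω ∂P, 0 ≤ X i ω)
    (hS₀ : 0 ≤ S₀) {a : ℝ} (ha0 : 0 ≤ a) (ha : mgf (X 0) P (-1) ≤ exp (-a)) {t x : ℝ}
    (ht : 1 ≤ t) (hx : 0 < x) :
    P {ω | x < renewalCount S₀ X t ω / t} ≤ ENNReal.ofReal (exp 1 * exp (-(a * x))) := by
  have ht0 : 0 < t := zero_lt_one.trans_le ht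
  set k := ⌈x * t⌉₊
  have hk : 1 ≤ k := Nat.one_le_iff_ne_zero.2 (Nat.ceil_pos.2 (by positivity)).ne'
  have hsub : {ω | x < renewalCount S₀ X t ω / t} ⊆ {ω | k ≤ renewalCount S₀ X t ω} :=
    fun ω hω => Nat.ceil_le.2 ((lt_div_iff₀ ht0).1 hω).le
  have hchernoff : exp t * mgf (X 0) P (-1) ^ k ≤ exp (t * (1 - a * x)) :=
    calc exp t * mgf (X 0) P (-1) ^ k ≤ exp t * exp (-a) ^ k := by
          gcongr
          exact mgf_nonneg
      _ = exp (t - a * k) := by rw [← exp_nat_mul, ← exp_add]; ring_nf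
      _ ≤ exp (t * (1 - a * x)) := by
          gcongr
          nlinarith [Nat.le_ceil (x * t)]
  calc P {ω | x < renewalCount S₀ X t ω / t}
      ≤ min 1 (ENNReal.ofReal (exp (t * (1 - a * x)))) :=
        le_min prob_le_one <| (measure_mono hsub).trans <|
          (measure_le_renewalCount_le hmeas hindep hident hnonneg hS₀ t hk).trans
            (ENNReal.ofReal_le_ofReal hchernoff)
    _ ≤ ENNReal.ofReal (exp (1 - a * x)) := by
        rcases le_total (1 - a * x) 0 with h | h
        · exact min_le_right _ _ |>.trans (ENNReal.ofReal_le_ofReal (exp_le_exp.2 (by nlinarith)))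
        · exact min_le_left _ _ |>.trans (ENNReal.one_le_ofReal.2 (one_le_exp h))
    _ = ENNReal.ofReal (exp 1 * exp (-(a * x))) := by rw [← exp_add, sub_eq_add_neg]

theorem exists_integral_renewalCount_div_pow_four_le (hmeas : ∀ i, Measurable (X i))
    (hindep : iIndepFun X P) (hident : ∀ i, IdentDistrib (X i) (X 0) P P)
    (hpos : ∀ i, ∀ᵐ ω ∂P, 0 < X i ω) (hS₀ : 0 ≤ S₀) :
    ∃ M, ∀ t ≥ 1,
      Integrable (fun ω => ((renewalCount S₀ X t ω : ℝ) / t) ^ 4) P ∧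
      ∫ ω, ((renewalCount S₀ X t ω : ℝ) / t) ^ 4 ∂P ≤ M := by
  have hnonneg : ∀ i, ∀ᵐ ω ∂P, 0 ≤ X i ω := fun i => (hpos i).mono fun ω hω => hω.le
  set φ := mgf (X 0) P (-1)
  have hφ_pos : 0 < φ :=
    mgf_pos (integrable_exp_neg_mul_of_nonneg (hmeas 0).aemeasurable (hnonneg 0))
  have hφ_lt : φ < 1 := mgf_neg_one_lt_one (hmeas 0).aemeasurable (hpos 0)
  have ha : 0 < -log φ := neg_pos.2 (log_neg hφ_pos hφ_lt)
  refine ⟨4 * exp 1 * ((1 / -log φ) ^ (4 : ℝ) * Gamma 4), fun t ht => ?_⟩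
  have hmoment := integral_rpow_le_of_measure_lt_le_exp (ae_of_all P fun ω => by positivity)
    ((measurable_renewalCount hmeas t).div_const t).aemeasurable (by norm_num : (0 : ℝ) < 4) ha
    (exp_pos 1).le
    fun x hx => measure_lt_renewalCount_div_le hmeas hindep hident hnonneg hS₀ ha.le
      (by rw [neg_neg, exp_log hφ_pos]) ht hx
  simpa only [← rpow_natCast, Nat.cast_ofNat] using hmoment

end Renewal

/-- Renewal theorem in `L²`: for i.i.d. strictly positive inter-arrival times with
finite mean `μ` (possibly infinite variance), the counting process satisfies
`N_t/t → 1/μ` in `L²`. -/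
theorem renewal_counting_L2
    {Ω : Type*} [MeasurableSpace Ω] (P : Measure Ω) [IsProbabilityMeasure P]
    (τ : ℕ → Ω → ℝ) (hmeas : ∀ k, Measurable (τ k))
    (hindep : iIndepFun τ P)
    (hident : ∀ k, Measure.map (τ k) P = Measure.map (τ 0) P)
    (hpos : ∀ k, ∀ᵐ ω ∂P, 0 < τ k ω)
    (hint : Integrable (τ 0) P)
    (μ : ℝ) (hμ : μ = ∫ ω, τ 0 ω ∂P)
    (S₀ : ℝ) (hS₀ : 0 ≤ S₀)
    (S : ℕ → Ω → ℝ) (hS : ∀ k ω, S k ω = S₀ + ∑ i ∈ Finset.range k, τ i ω)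
    (N : ℝ → Ω → ℕ) (hN : ∀ t ω, N t ω = Set.ncard {k : ℕ | 1 ≤ k ∧ S k ω ≤ t}) :
    Tendsto (fun t : ℝ => ∫ ω, ((N t ω : ℝ) / t - 1 / μ) ^ 2 ∂P) atTop (nhds 0) := by
  have hN' : N = renewalCount S₀ τ := by
    ext t ω
    simp only [hN, hS, renewalCount, arrivalCount]
  subst hN'
  have hident' : ∀ i, IdentDistrib (τ i) (τ 0) P P := fun i =>
    ⟨(hmeas i).aemeasurable, (hmeas 0).aemeasurable, hident i⟩
  have hμ_pos : 0 < μ := hμ ▸ integral_pos_of_ae_pos hint (hpos 0)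
  have hlim : ∀ᵐ ω ∂P, Tendsto (fun t => (renewalCount S₀ τ t ω : ℝ) / t) atTop (𝓝 (1 / μ)) := by
    filter_upwards [ae_all_iff.2 hpos,
      strong_law_ae_real τ hint (fun i j hij => hindep.indepFun hij) hident'] with ω hω hslln
    rw [one_div]
    refine arrivalCount.tendsto_div (monotone_const_add_sum_range (fun i => (hω i).le) S₀) hμ_pos ?_
    simpa [add_div, hμ] using (tendsto_const_div_atTop_nhds_zero_nat S₀).add hslln
  obtain ⟨M, hM⟩ := exists_integral_renewalCount_div_pow_four_le hmeas hindep hident' hpos hS₀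
  exact tendsto_integral_sub_sq_of_integral_pow_four_le (M := M)
    (Eventually.of_forall fun t =>
      ((measurable_renewalCount hmeas t).div_const t).aestronglyMeasurable)
    ((eventually_ge_atTop 1).mono fun t ht => (hM t ht).1)
    ((eventually_ge_atTop 1).mono fun t ht => (hM t ht).2) hlim
end

section
/- Let 0 < β_L ≤ β_R. For x, η ≥ 0 set C(x,η) = ∫₀^∞ v e^{−η/v − x v²/2} dv and F(λ,η) = β_L β_R C(β_R+λ, η) C(β_L−λ, η). Then for every λ ∈ (−β_R, β_L−β_R) ∪ (0, β_L) there exists a unique η₀ > 0 such that F(λ, η₀) = 1. -/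
open MeasureTheory

/-- `C(x,η) = ∫₀^∞ v e^{−η/v − x v²/2} dv`. -/
noncomputable def Ccal (x η : ℝ) : ℝ :=
  ∫ v in Set.Ioi (0 : ℝ), v * Real.exp (-η / v - x * v ^ 2 / 2)

/-- `F(λ,η) = β_L β_R C(β_R+λ, η) C(β_L−λ, η)`. -/
noncomputable def Fcal (βL βR lam η : ℝ) : ℝ :=
  βL * βR * Ccal (βR + lam) η * Ccal (βL - lam) η

/-!
For `x > 0`, `C(x, ·)` is continuous and strictly decreasing on `[0, ∞)` (dominated by
`v e^{-x v²/2}`), tends to `0` at infinity and equals `1/x` at `η = 0`. Hence `F(λ, ·)` decreases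
strictly and continuously from `β_L β_R / ((β_R+λ)(β_L−λ))` to `0`. The range condition on `λ`
makes both arguments of `C` positive and this initial value larger than `1`, because
`β_L β_R − (β_R+λ)(β_L−λ) = λ (β_R − β_L + λ)`. The intermediate value theorem gives the root and
strict monotonicity its uniqueness.
-/

open Set Filter Real Topology

theorem StrictAntiOn.existsUnique_eq_of_tendsto_atTop {f : ℝ → ℝ} {a c l : ℝ}
    (hf : StrictAntiOn f (Ici a)) (hcont : ContinuousOn f (Ici a)) (hfa : c < f a)
    (hlim : Tendsto f atTop (𝓝 l)) (hlc : l < c) : ∃! x, a < x ∧ f x = c := by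
  obtain ⟨b, hfb, hab⟩ := ((hlim.eventually_lt_const hlc).and (eventually_gt_atTop a)).exists
  obtain ⟨x, hx, hfx⟩ :=
    intermediate_value_Icc' hab.le (hcont.mono Icc_subset_Ici_self) ⟨hfb.le, hfa.le⟩
  have hax : a < x := hx.1.lt_of_ne (by rintro rfl; exact hfa.ne' hfx)
  exact ⟨x, ⟨hax, hfx⟩, fun y ⟨hay, hfy⟩ => hf.injOn hay.le hax.le (hfy.trans hfx.symm)⟩

theorem setIntegral_pos_of_forall_pos {X : Type*} [MeasurableSpace X] {μ : Measure X}
    {s : Set X} {f : X → ℝ} (hs : MeasurableSet s) (hμs : μ s ≠ 0)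
    (hf : IntegrableOn f s μ) (hpos : ∀ x ∈ s, 0 < f x) : 0 < ∫ x in s, f x ∂μ := by
  rw [setIntegral_pos_iff_support_of_nonneg_ae
    (ae_restrict_of_forall_mem hs fun x hx => (hpos x hx).le) hf]
  exact (pos_iff_ne_zero.2 hμs).trans_le
    (measure_mono fun x hx => ⟨(hpos x hx).ne', hx⟩)

section Ccal

variable {x η : ℝ}

lemma norm_Ccal_integrand_le (hη : 0 ≤ η) {v : ℝ} (hv : 0 < v) :
    ‖v * exp (-η / v - x * v ^ 2 / 2)‖ ≤ v * exp (-(x / 2) * v ^ 2) := by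
  rw [norm_mul, norm_of_nonneg hv.le, norm_of_nonneg (exp_pos _).le]
  have : -η / v ≤ 0 := div_nonpos_of_nonpos_of_nonneg (neg_nonpos.2 hη) hv.le
  gcongr
  linarith

lemma integrableOn_Ccal_integrand (hx : 0 < x) (hη : 0 ≤ η) :
    IntegrableOn (fun v => v * exp (-η / v - x * v ^ 2 / 2)) (Ioi 0) := by
  refine (integrable_mul_exp_neg_mul_sq (half_pos hx)).integrableOn.mono' (by fun_prop) ?_
  exact ae_restrict_of_forall_mem measurableSet_Ioi fun v hv => norm_Ccal_integrand_le hη hv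

lemma Ccal_pos (hx : 0 < x) (hη : 0 ≤ η) : 0 < Ccal x η :=
  setIntegral_pos_of_forall_pos measurableSet_Ioi (by simp) (integrableOn_Ccal_integrand hx hη)
    fun v (hv : 0 < v) => by positivity

lemma strictAntiOn_Ccal (hx : 0 < x) : StrictAntiOn (Ccal x) (Ici 0) := by
  intro η₁ (hη₁ : 0 ≤ η₁) η₂ (hη₂ : 0 ≤ η₂) hlt
  rw [← sub_pos, Ccal, Ccal, ← integral_sub (integrableOn_Ccal_integrand hx hη₁)
    (integrableOn_Ccal_integrand hx hη₂)]
  refine setIntegral_pos_of_forall_pos measurableSet_Ioi (by simp)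
    ((integrableOn_Ccal_integrand hx hη₁).sub (integrableOn_Ccal_integrand hx hη₂))
    fun v (hv : 0 < v) => sub_pos.2 ?_
  gcongr

lemma continuousOn_Ccal (hx : 0 < x) : ContinuousOn (Ccal x) (Ici 0) := by
  refine continuousOn_of_dominated (fun η _ => by fun_prop)
    (fun η (hη : 0 ≤ η) => ae_restrict_of_forall_mem measurableSet_Ioi
      fun v hv => norm_Ccal_integrand_le hη hv)
    (integrable_mul_exp_neg_mul_sq (half_pos hx)).integrableOn
    (ae_restrict_of_forall_mem measurableSet_Ioi fun v _ => ?_)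
  exact Continuous.continuousOn (by fun_prop)

lemma tendsto_Ccal_atTop (hx : 0 < x) : Tendsto (Ccal x) atTop (𝓝 0) := by
  have hpointwise (v : ℝ) (hv : 0 < v) :
      Tendsto (fun η => v * exp (-η / v - x * v ^ 2 / 2)) atTop (𝓝 0) := by
    have hdiv : Tendsto (fun η => -η / v) atTop atBot :=
      tendsto_neg_atTop_atBot.atBot_div_const hv
    simpa [sub_eq_add_neg] using
      (tendsto_exp_atBot.comp (tendsto_atBot_add_const_right _ _ hdiv)).const_mul v
  have := tendsto_integral_filter_of_dominated_convergence (μ := volume.restrict (Ioi 0))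
    (F := fun η v => v * exp (-η / v - x * v ^ 2 / 2)) (f := fun _ => 0) _
    (Eventually.of_forall fun η => by fun_prop)
    ((eventually_ge_atTop 0).mono fun η hη => ae_restrict_of_forall_mem measurableSet_Ioi
      fun v hv => norm_Ccal_integrand_le hη hv)
    (integrable_mul_exp_neg_mul_sq (half_pos hx)).integrableOn
    (ae_restrict_of_forall_mem measurableSet_Ioi hpointwise)
  rwa [integral_zero] at this

lemma Ccal_zero_right (hx : 0 < x) : Ccal x 0 = x⁻¹ := by
  have h := integral_mul_cexp_neg_mul_sq (b := ((x / 2 : ℝ) : ℂ)) (by simpa using hx)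
  have hint : (fun v => v * exp (-0 / v - x * v ^ 2 / 2)) =
      fun v => v * exp (-(x / 2) * v ^ 2) := by
    ext v; ring_nf
  rw [Ccal, hint]
  apply Complex.ofReal_injective
  rw [← integral_complex_ofReal]
  push_cast at h ⊢
  rw [h]
  ring

end Ccal

section Fcal

variable {βL βR lam : ℝ}

lemma strictAntiOn_Fcal (hβ : 0 < βL * βR) (ha : 0 < βR + lam) (hb : 0 < βL - lam) :
    StrictAntiOn (Fcal βL βR lam) (Ici 0) := by
  intro η₁ hη₁ η₂ (hη₂ : 0 ≤ η₂) hlt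
  exact mul_lt_mul'' (mul_lt_mul_of_pos_left (strictAntiOn_Ccal ha hη₁ hη₂ hlt) hβ)
    (strictAntiOn_Ccal hb hη₁ hη₂ hlt) (mul_pos hβ (Ccal_pos ha hη₂)).le
    (Ccal_pos hb hη₂).le

lemma continuousOn_Fcal (ha : 0 < βR + lam) (hb : 0 < βL - lam) :
    ContinuousOn (Fcal βL βR lam) (Ici 0) :=
  (continuousOn_const.mul (continuousOn_Ccal ha)).mul (continuousOn_Ccal hb)

lemma tendsto_Fcal_atTop (ha : 0 < βR + lam) (hb : 0 < βL - lam) :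
    Tendsto (Fcal βL βR lam) atTop (𝓝 0) := by
  have h := ((tendsto_Ccal_atTop ha).const_mul (βL * βR)).mul (tendsto_Ccal_atTop hb)
  rwa [mul_zero] at h

lemma Fcal_zero_right (ha : 0 < βR + lam) (hb : 0 < βL - lam) :
    Fcal βL βR lam 0 = βL * βR / ((βR + lam) * (βL - lam)) := by
  rw [Fcal, Ccal_zero_right ha, Ccal_zero_right hb]
  field_simp

end Fcal

/-- For every `λ ∈ (−β_R, β_L−β_R) ∪ (0, β_L)` there is a unique `η₀ > 0`
with `F(λ, η₀) = 1`. -/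
theorem exists_unique_eta_Fcal_eq_one
    (βL βR : ℝ) (hβL : 0 < βL) (hLR : βL ≤ βR)
    (lam : ℝ)
    (hlam : lam ∈ Set.Ioo (-βR) (βL - βR) ∪ Set.Ioo 0 βL) :
    ∃! η : ℝ, 0 < η ∧ Fcal βL βR lam η = 1 := by
  have ha : 0 < βR + lam := by rcases hlam with ⟨h₁, h₂⟩ | ⟨h₁, h₂⟩ <;> linarith
  have hb : 0 < βL - lam := by rcases hlam with ⟨h₁, h₂⟩ | ⟨h₁, h₂⟩ <;> linarith
  have hβ : 0 < βL * βR := mul_pos hβL (hβL.trans_le hLR)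
  have hF0 : 1 < Fcal βL βR lam 0 := by
    rw [Fcal_zero_right ha hb, one_lt_div (mul_pos ha hb)]
    rcases hlam with ⟨h₁, h₂⟩ | ⟨h₁, h₂⟩ <;> nlinarith
  exact (strictAntiOn_Fcal hβ ha hb).existsUnique_eq_of_tendsto_atTop (continuousOn_Fcal ha hb)
    hF0 (tendsto_Fcal_atTop ha hb) one_pos
end

section
/- Let 0 < β_L ≤ β_R, T_L = 1/β_L, T_R = 1/β_R, and κ = (√(πβ_L/2) + √(πβ_R/2))^{−1}. For λ ∈ (0, β_L), let f(λ) be the unique η > 0 with F(λ, η) = 1. Then f is differentiable on (0, β_L) and lim_{λ↓0} f'(λ) = κ (T_L − T_R). -/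
/-!
For fixed `λ`, `η ↦ F(λ, η)` is strictly decreasing on `[0, ∞)` and `F(0, 0) = 1`; together with
continuity of `F` in `λ` this makes `f` continuous and forces `f(λ) → 0` as `λ ↓ 0`.
Differentiating under the integral sign, `F` is Fréchet differentiable at every `(λ, η)` with
`η > 0`, with `∂_η F < 0`, so the implicit function argument gives `f' = -∂_λ F / ∂_η F` along
the graph of `f`. As `λ ↓ 0` both partial derivatives converge to their values at `(0, 0)`, which
are Gaussian moments: `∂_λ F → T_L - T_R` and `∂_η F → -(√(πβ_L/2) + √(πβ_R/2))`.
-/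

open MeasureTheory Filter

open Set Topology Asymptotics Real

noncomputable def weight (x η v : ℝ) : ℝ := exp (-η / v - x * v ^ 2 / 2)

noncomputable def moment (k : ℕ) (x η : ℝ) : ℝ := ∫ v in Ioi 0, v ^ k * weight x η v

lemma Ccal_eq_moment_one (x η : ℝ) : Ccal x η = moment 1 x η := by
  simp only [Ccal, moment, weight, pow_one]

lemma moment_zero_eq_integral (x η : ℝ) : moment 0 x η = ∫ v in Ioi 0, weight x η v := by
  simp only [moment, pow_zero, one_mul]

lemma weight_eta_zero (x v : ℝ) : weight x 0 v = exp (-(x / 2) * v ^ 2) := by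
  rw [weight]; ring_nf

@[fun_prop]
lemma measurable_weight (x η : ℝ) : Measurable (weight x η) := by
  unfold weight; fun_prop

lemma weight_le_exp {x η c v : ℝ} (hv : 0 < v) (hη : 0 ≤ η) (hc : c ≤ x) :
    weight x η v ≤ exp (-(c / 2) * v ^ 2) := by
  have : 0 ≤ η / v := div_nonneg hη hv.le
  refine exp_le_exp.2 ?_
  rw [neg_div]
  nlinarith [sq_nonneg v]

lemma integrableOn_pow_mul_exp_neg_mul_sq (k : ℕ) {b : ℝ} (hb : 0 < b) :
    IntegrableOn (fun v : ℝ => v ^ k * exp (-b * v ^ 2)) (Ioi 0) := by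
  simpa only [rpow_natCast] using
    integrableOn_rpow_mul_exp_neg_mul_sq hb (s := k) (by linarith [k.cast_nonneg (α := ℝ)])

lemma norm_pow_mul_weight_le {k : ℕ} {x η c v : ℝ} (hv : 0 < v) (hη : 0 ≤ η) (hc : c ≤ x) :
    ‖v ^ k * weight x η v‖ ≤ v ^ k * exp (-(c / 2) * v ^ 2) := by
  rw [norm_of_nonneg (by unfold weight; positivity)]
  exact mul_le_mul_of_nonneg_left (weight_le_exp hv hη hc) (by positivity)

lemma integrableOn_pow_mul_weight (k : ℕ) {x η : ℝ} (hx : 0 < x) (hη : 0 ≤ η) :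
    IntegrableOn (fun v => v ^ k * weight x η v) (Ioi 0) := by
  refine (integrableOn_pow_mul_exp_neg_mul_sq k (half_pos hx)).mono' (by fun_prop) ?_
  filter_upwards [ae_restrict_mem measurableSet_Ioi] with v hv
  exact norm_pow_mul_weight_le hv hη le_rfl

lemma setIntegral_Ioi_pos {g : ℝ → ℝ} (hpos : ∀ v ∈ Ioi (0 : ℝ), 0 < g v)
    (hint : IntegrableOn g (Ioi 0)) : 0 < ∫ v in Ioi 0, g v := by
  rw [setIntegral_pos_iff_support_of_nonneg_ae
    ((ae_restrict_iff' measurableSet_Ioi).2 (.of_forall fun v hv => (hpos v hv).le)) hint]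
  refine lt_of_lt_of_le ?_ (measure_mono (inter_subset_inter_left _ fun v hv => (hpos v hv).ne'))
  simp [Real.volume_Ioi]

lemma moment_pos (k : ℕ) {x η : ℝ} (hx : 0 < x) (hη : 0 ≤ η) : 0 < moment k x η :=
  setIntegral_Ioi_pos (fun v (hv : 0 < v) => by unfold weight; positivity)
    (integrableOn_pow_mul_weight k hx hη)

lemma weight_strictAnti {x v : ℝ} (hv : 0 < v) : StrictAnti fun η => weight x η v :=
  fun η η' h => exp_lt_exp.2 (by rw [neg_div, neg_div]; linarith [div_lt_div_of_pos_right h hv])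

lemma moment_strictAntiOn (k : ℕ) {x : ℝ} (hx : 0 < x) : StrictAntiOn (moment k x) (Ici 0) := by
  intro η hη η' hη' h
  have hint η (hη : η ∈ Ici (0 : ℝ)) := integrableOn_pow_mul_weight k hx hη
  rw [← sub_pos, moment, moment, ← integral_sub (hint η hη) (hint η' hη')]
  refine setIntegral_Ioi_pos (fun v (hv : 0 < v) => ?_) ((hint η hη).sub (hint η' hη'))
  simpa [← mul_sub] using mul_pos (pow_pos hv k) (sub_pos.2 (weight_strictAnti hv h))

lemma moment_zero_eta_zero {x : ℝ} (hx : 0 < x) : moment 0 x 0 = √(π / (2 * x)) := by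
  simp_rw [moment_zero_eq_integral, weight_eta_zero, integral_gaussian_Ioi]
  rw [show π / (x / 2) = 2 ^ 2 * (π / (2 * x)) by field_simp, sqrt_mul (by positivity),
    sqrt_sq zero_le_two]
  ring

lemma moment_eta_zero_eq_Gamma (k : ℕ) {x : ℝ} (hx : 0 < x) :
    moment k x 0 = (x / 2) ^ (-(k + 1) / 2 : ℝ) * (1 / 2) * Gamma ((k + 1) / 2) := by
  simp_rw [moment, weight_eta_zero]
  have := integral_rpow_mul_exp_neg_mul_rpow (p := 2) (q := k) (b := x / 2) two_pos
    (by linarith [k.cast_nonneg (α := ℝ)]) (half_pos hx)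
  rw [← this]
  refine setIntegral_congr_fun measurableSet_Ioi fun v hv => ?_
  simp only [rpow_natCast, rpow_two]

lemma mul_sqrt_pi_div {x : ℝ} (hx : 0 < x) : x * √(π / (2 * x)) = √(π * x / 2) := by
  rw [show π * x / 2 = x ^ 2 * (π / (2 * x)) by field_simp, sqrt_mul (sq_nonneg x),
    sqrt_sq hx.le]

lemma moment_one_eta_zero {x : ℝ} (hx : 0 < x) : moment 1 x 0 = 1 / x := by
  rw [moment_eta_zero_eq_Gamma 1 hx]
  norm_num [rpow_neg_one]

lemma moment_three_eta_zero {x : ℝ} (hx : 0 < x) : moment 3 x 0 = 2 / x ^ 2 := by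
  rw [moment_eta_zero_eq_Gamma 3 hx]
  norm_num [rpow_neg, rpow_two]
  field_simp

lemma tendsto_moment (k : ℕ) {α : Type*} {l : Filter α} [l.IsCountablyGenerated] {x₀ η₀ : ℝ}
    (hx₀ : 0 < x₀) {u w : α → ℝ} (hu : Tendsto u l (𝓝 x₀)) (hw : Tendsto w l (𝓝 η₀))
    (hw0 : ∀ᶠ t in l, 0 ≤ w t) :
    Tendsto (fun t => moment k (u t) (w t)) l (𝓝 (moment k x₀ η₀)) := by
  refine tendsto_integral_filter_of_dominated_convergence
    (fun v => v ^ k * exp (-(x₀ / 2 / 2) * v ^ 2)) (.of_forall fun t => by fun_prop) ?_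
    (integrableOn_pow_mul_exp_neg_mul_sq k (by positivity)) (.of_forall fun v => ?_)
  · filter_upwards [hu.eventually (eventually_ge_nhds (half_lt_self hx₀)), hw0] with t hut hwt
    filter_upwards [ae_restrict_mem measurableSet_Ioi] with v hv
    exact norm_pow_mul_weight_le hv hwt hut
  · exact ((hw.neg.div_const v).sub ((hu.mul_const _).div_const 2)).rexp.const_mul _

noncomputable def integrandFDeriv (z : ℝ × ℝ) (v : ℝ) : ℝ × ℝ →L[ℝ] ℝ :=
  (-(v ^ 3 * weight z.1 z.2 v) / 2) • ContinuousLinearMap.fst ℝ ℝ ℝ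
    + (-weight z.1 z.2 v) • ContinuousLinearMap.snd ℝ ℝ ℝ

lemma hasFDerivAt_integrand {v : ℝ} (hv : v ≠ 0) (z : ℝ × ℝ) :
    HasFDerivAt (fun z : ℝ × ℝ => v * weight z.1 z.2 v) (integrandFDeriv z v) z := by
  let L : ℝ × ℝ →L[ℝ] ℝ :=
    (-(v ^ 2 / 2)) • ContinuousLinearMap.fst ℝ ℝ ℝ + (-v⁻¹) • ContinuousLinearMap.snd ℝ ℝ ℝ
  have hL (z : ℝ × ℝ) : weight z.1 z.2 v = exp (L z) := by
    simp only [weight, L, _root_.add_apply, _root_.smul_apply,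
      ContinuousLinearMap.coe_fst', ContinuousLinearMap.coe_snd', smul_eq_mul]
    ring_nf
  simp only [hL]
  refine ((L.hasFDerivAt (x := z)).exp.const_mul v).congr_fderiv
    (ContinuousLinearMap.ext fun z' => ?_)
  simp only [integrandFDeriv, hL, L, add_apply, smul_apply, ContinuousLinearMap.coe_fst',
    ContinuousLinearMap.coe_snd', smul_eq_mul]
  field_simp

lemma norm_integrandFDeriv_le {x₀ v : ℝ} {z : ℝ × ℝ} (hv : 0 < v)
    (hz : z ∈ Ici (x₀ / 2) ×ˢ Ici 0) :
    ‖integrandFDeriv z v‖ ≤ (v ^ 3 / 2 + 1) * exp (-(x₀ / 2 / 2) * v ^ 2) := by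
  have hw := weight_le_exp hv hz.2 hz.1
  have hw0 : 0 ≤ weight z.1 z.2 v := (exp_pos _).le
  calc ‖integrandFDeriv z v‖
      ≤ ‖-(v ^ 3 * weight z.1 z.2 v) / 2‖ * ‖ContinuousLinearMap.fst ℝ ℝ ℝ‖
        + ‖-weight z.1 z.2 v‖ * ‖ContinuousLinearMap.snd ℝ ℝ ℝ‖ := by
        refine (norm_add_le _ _).trans (add_le_add ?_ ?_) <;>
          exact norm_smul_le (β := ℝ × ℝ →L[ℝ] ℝ) _ _
    _ ≤ v ^ 3 * weight z.1 z.2 v / 2 * 1 + weight z.1 z.2 v * 1 := by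
        rw [norm_div, norm_neg, norm_neg, norm_of_nonneg (by positivity), norm_of_nonneg hw0,
          RCLike.norm_two]
        gcongr
        · exact ContinuousLinearMap.norm_fst_le ..
        · exact ContinuousLinearMap.norm_snd_le ..
    _ ≤ _ := by nlinarith [pow_pos hv 3]

lemma hasFDerivAt_Ccal {x η : ℝ} (hx : 0 < x) (hη : 0 < η) :
    HasFDerivAt (fun z : ℝ × ℝ => Ccal z.1 z.2)
      ((-moment 3 x η / 2) • ContinuousLinearMap.fst ℝ ℝ ℝ
        + (-moment 0 x η) • ContinuousLinearMap.snd ℝ ℝ ℝ) (x, η) := by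
  have hbound : Integrable (fun v => (v ^ 3 / 2 + 1) * exp (-(x / 2 / 2) * v ^ 2))
      (volume.restrict (Ioi 0)) := by
    have hb : 0 < x / 2 / 2 := by positivity
    refine (((integrableOn_pow_mul_exp_neg_mul_sq 3 hb).div_const 2).add
      (integrableOn_pow_mul_exp_neg_mul_sq 0 hb)).congr (.of_forall fun v => ?_)
    simp only [Pi.add_apply]
    ring
  have hmeas : AEStronglyMeasurable (integrandFDeriv (x, η)) (volume.restrict (Ioi 0)) := by
    unfold integrandFDeriv; fun_prop
  have hderiv := hasFDerivAt_integral_of_dominated_of_fderiv_le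
    (F := fun z v => v * weight z.1 z.2 v) (μ := volume.restrict (Ioi 0))
    (prod_mem_nhds (Ici_mem_nhds (half_lt_self hx)) (Ici_mem_nhds hη))
    (.of_forall fun z => by fun_prop)
    (by simpa only [pow_one] using (integrableOn_pow_mul_weight 1 hx hη.le).integrable) hmeas
    ((ae_restrict_iff' measurableSet_Ioi).2 (.of_forall fun v hv z hz =>
      norm_integrandFDeriv_le hv hz))
    hbound
    ((ae_restrict_iff' measurableSet_Ioi).2 (.of_forall fun v hv z _ =>
      hasFDerivAt_integrand (ne_of_gt hv) z))
  refine hderiv.congr_fderiv ?_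
  have hfst : IntegrableOn (fun v => (-(v ^ 3 * weight x η v) / 2) •
      ContinuousLinearMap.fst ℝ ℝ ℝ) (Ioi 0) :=
    ((integrableOn_pow_mul_weight 3 hx hη.le).neg.div_const 2).smul_const _
  have hsnd : IntegrableOn (fun v => (-weight x η v) • ContinuousLinearMap.snd ℝ ℝ ℝ) (Ioi 0) := by
    have := (integrableOn_pow_mul_weight 0 hx hη.le).integrable.neg.smul_const
      (ContinuousLinearMap.snd ℝ ℝ ℝ)
    simp only [Pi.neg_apply, pow_zero, one_mul] at this
    exact this
  simp only [integrandFDeriv]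
  rw [integral_add hfst hsnd, integral_smul_const, integral_smul_const, integral_div,
    integral_neg, integral_neg, moment_zero_eq_integral, moment]

/-- Also for `x ≤ 0`, where the integral diverges and takes the junk value `0`. -/
lemma Ccal_nonneg (x η : ℝ) : 0 ≤ Ccal x η :=
  setIntegral_nonneg measurableSet_Ioi fun v (hv : 0 < v) => by positivity

lemma pos_of_Fcal_eq_one {βL βR lam η : ℝ} (hβL : 0 ≤ βL) (h : Fcal βL βR lam η = 1) :
    0 < βR := by
  by_contra! hβR
  have : Fcal βL βR lam η ≤ 0 :=
    mul_nonpos_of_nonpos_of_nonneg (mul_nonpos_of_nonpos_of_nonneg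
      (mul_nonpos_of_nonneg_of_nonpos hβL hβR) (Ccal_nonneg _ _)) (Ccal_nonneg _ _)
  linarith

lemma Fcal_zero_zero {βL βR : ℝ} (hβL : 0 < βL) (hβR : 0 < βR) : Fcal βL βR 0 0 = 1 := by
  simp only [Fcal, add_zero, sub_zero, Ccal_eq_moment_one, moment_one_eta_zero hβL,
    moment_one_eta_zero hβR]
  field_simp

lemma Fcal_strictAntiOn {βL βR lam : ℝ} (hβL : 0 < βL) (hβR : 0 < βR) (hR : 0 < βR + lam)
    (hL : 0 < βL - lam) : StrictAntiOn (Fcal βL βR lam) (Ici 0) := by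
  intro η hη η' hη' h
  simp only [Fcal, Ccal_eq_moment_one, mul_assoc]
  exact mul_lt_mul_of_pos_left (mul_lt_mul_of_pos_left (mul_lt_mul''
    (moment_strictAntiOn 1 hR hη hη' h) (moment_strictAntiOn 1 hL hη hη' h)
    (moment_pos 1 hR hη').le (moment_pos 1 hL hη').le) hβR) hβL

lemma continuousAt_Fcal {βL βR lam c : ℝ} (hR : 0 < βR + lam) (hL : 0 < βL - lam)
    (hc : 0 ≤ c) : ContinuousAt (fun t => Fcal βL βR t c) lam := by
  have hc' : ∀ᶠ _ in 𝓝 lam, 0 ≤ c := .of_forall fun _ => hc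
  simp only [ContinuousAt, Fcal, Ccal_eq_moment_one]
  exact ((tendsto_moment 1 hR (tendsto_const_nhds.add tendsto_id) tendsto_const_nhds hc').const_mul
    _).mul (tendsto_moment 1 hL (tendsto_const_nhds.sub tendsto_id) tendsto_const_nhds hc')

noncomputable def FcalLamDeriv (βL βR lam η : ℝ) : ℝ :=
  βL * βR * (Ccal (βR + lam) η * moment 3 (βL - lam) η
    - moment 3 (βR + lam) η * Ccal (βL - lam) η) / 2

noncomputable def FcalEtaDeriv (βL βR lam η : ℝ) : ℝ :=
  -(βL * βR * (moment 0 (βR + lam) η * Ccal (βL - lam) η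
    + Ccal (βR + lam) η * moment 0 (βL - lam) η))

lemma hasFDerivAt_Fcal {βL βR lam η : ℝ} (hR : 0 < βR + lam) (hL : 0 < βL - lam) (hη : 0 < η) :
    HasFDerivAt (fun z : ℝ × ℝ => Fcal βL βR z.1 z.2)
      (FcalLamDeriv βL βR lam η • ContinuousLinearMap.fst ℝ ℝ ℝ
        + FcalEtaDeriv βL βR lam η • ContinuousLinearMap.snd ℝ ℝ ℝ) (lam, η) := by
  have hshiftR : HasFDerivAt (fun z : ℝ × ℝ => (βR + z.1, z.2)) _ (lam, η) :=
    (hasFDerivAt_fst.const_add βR).prodMk (hasFDerivAt_snd (𝕜 := ℝ))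
  have hshiftL : HasFDerivAt (fun z : ℝ × ℝ => (βL - z.1, z.2)) _ (lam, η) :=
    (hasFDerivAt_fst.const_sub βL).prodMk (hasFDerivAt_snd (𝕜 := ℝ))
  have hCR := (hasFDerivAt_Ccal hR hη).comp (lam, η) hshiftR
  have hCL := (hasFDerivAt_Ccal hL hη).comp (lam, η) hshiftL
  refine ((hCR.const_mul (βL * βR)).mul hCL).congr_fderiv (ContinuousLinearMap.ext fun z => ?_)
  simp only [FcalLamDeriv, FcalEtaDeriv, Function.comp_apply, ContinuousLinearMap.add_comp,
    ContinuousLinearMap.smul_comp, ContinuousLinearMap.fst_comp_prod,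
    ContinuousLinearMap.snd_comp_prod, ContinuousLinearMap.fst_prod_snd,
    ContinuousLinearMap.comp_id, add_apply, neg_apply, smul_apply, ContinuousLinearMap.coe_fst',
    ContinuousLinearMap.coe_snd', smul_eq_mul]
  ring

lemma FcalEtaDeriv_neg {βL βR lam η : ℝ} (hβL : 0 < βL) (hβR : 0 < βR) (hR : 0 < βR + lam)
    (hL : 0 < βL - lam) (hη : 0 ≤ η) : FcalEtaDeriv βL βR lam η < 0 := by
  simp only [FcalEtaDeriv, Ccal_eq_moment_one, neg_lt_zero]
  have := moment_pos 0 hR hη; have := moment_pos 0 hL hη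
  have := moment_pos 1 hR hη; have := moment_pos 1 hL hη
  positivity

lemma tendsto_of_antitoneOn_of_level {α : Type*} {l : Filter α} {G : α → ℝ → ℝ} {g : ℝ → ℝ}
    {f : α → ℝ} {b : ℝ} (hg : StrictAntiOn g (Ici 0)) (hb : 0 ≤ b)
    (hG : ∀ c, 0 ≤ c → Tendsto (fun t => G t c) l (𝓝 (g c)))
    (hanti : ∀ᶠ t in l, AntitoneOn (G t) (Ici 0))
    (hf : ∀ᶠ t in l, 0 ≤ f t ∧ G t (f t) = g b) :
    Tendsto f l (𝓝 b) := by
  refine tendsto_order.2 ⟨fun c hcb => ?_, fun c hbc => ?_⟩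
  · rcases lt_or_ge c 0 with hc | hc
    · filter_upwards [hf] with t ht using hc.trans_le ht.1
    filter_upwards [(hG c hc).eventually (eventually_gt_nhds (hg hc hb hcb)), hanti, hf]
      with t hGt hanti_t hft
    exact hanti_t.reflect_lt hft.1 hc (hft.2.trans_lt hGt)
  · have hc : 0 ≤ c := hb.trans hbc.le
    filter_upwards [(hG c hc).eventually (eventually_lt_nhds (hg hb hc hbc)), hanti, hf]
      with t hGt hanti_t hft
    exact hanti_t.reflect_lt hc hft.1 (hGt.trans_eq hft.2.symm)

lemma HasFDerivAt.hasDerivAt_of_apply_eq {G : ℝ × ℝ → ℝ} {p q a : ℝ} {f : ℝ → ℝ}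
    (hG : HasFDerivAt G (p • ContinuousLinearMap.fst ℝ ℝ ℝ + q • ContinuousLinearMap.snd ℝ ℝ ℝ)
      (a, f a)) (hq : q ≠ 0) (hf : ContinuousAt f a)
    (hlevel : ∀ᶠ x in 𝓝 a, G (x, f x) = G (a, f a)) :
    HasDerivAt f (-p / q) a := by
  set u : ℝ → ℝ := fun x => x - a
  set w : ℝ → ℝ := fun x => f x - f a
  have hlin : (fun x => p * u x + q * w x) =o[𝓝 a] fun x => (u x, w x) := by
    have := hG.isLittleO.comp_tendsto (continuousAt_id.prodMk hf)
    refine this.neg_left.congr' ?_ (.of_forall fun x => rfl)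
    filter_upwards [hlevel] with x hx
    simp [hx, u, w]
  have hbig : (fun x => (u x, w x)) =O[𝓝 a] u := by
    -- `(u, w)` differs from `(u, -(p / q) u)` by `(0, (p u + q w) / q) = o((u, w))`.
    have hsmall : (fun x => ((0 : ℝ), q⁻¹ * (p * u x + q * w x))) =o[𝓝 a] fun x => (u x, w x) :=
      (isLittleO_zero _ _).prod_left (hlin.const_mul_left q⁻¹)
    refine hsmall.right_isBigO_sub.trans ((isBigO_refl u _).prod_left
      ((isBigO_refl u _).const_mul_left (-p / q)) |>.congr_left fun x => ?_)
    simp only [Prod.mk_sub_mk, sub_zero, Prod.mk.injEq, true_and]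
    field_simp
    ring
  rw [hasDerivAt_iff_isLittleO]
  refine ((hlin.trans_isBigO hbig).const_mul_left q⁻¹).congr_left fun x => ?_
  simp only [u, w, smul_eq_mul]
  field_simp
  ring

lemma continuousAt_of_Fcal_eq_one {βL βR : ℝ} {f : ℝ → ℝ} (hβL : 0 < βL) (hβR : 0 < βR)
    (hf : ∀ lam ∈ Ioo 0 βL, 0 < f lam ∧ Fcal βL βR lam (f lam) = 1) {lam : ℝ}
    (hlam : lam ∈ Ioo 0 βL) : ContinuousAt f lam := by
  have hnhds : Ioo 0 βL ∈ 𝓝 lam := isOpen_Ioo.mem_nhds hlam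
  refine tendsto_of_antitoneOn_of_level
    (Fcal_strictAntiOn hβL hβR (by linarith [hlam.1]) (by linarith [hlam.2])) (hf lam hlam).1.le
    (fun c hc => continuousAt_Fcal (by linarith [hlam.1]) (by linarith [hlam.2]) hc)
    (eventually_of_mem hnhds fun t ht => ?_) (eventually_of_mem hnhds fun t ht => ?_)
  · exact (Fcal_strictAntiOn hβL hβR (by linarith [ht.1]) (by linarith [ht.2])).antitoneOn
  · exact ⟨(hf t ht).1.le, (hf t ht).2.trans (hf lam hlam).2.symm⟩

lemma tendsto_nhdsGT_zero_of_Fcal_eq_one {βL βR : ℝ} {f : ℝ → ℝ} (hβL : 0 < βL) (hβR : 0 < βR)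
    (hf : ∀ lam ∈ Ioo 0 βL, 0 < f lam ∧ Fcal βL βR lam (f lam) = 1) :
    Tendsto f (𝓝[>] 0) (𝓝 0) := by
  have hIoo : Ioo 0 βL ∈ 𝓝[>] (0 : ℝ) := Ioo_mem_nhdsGT hβL
  refine tendsto_of_antitoneOn_of_level (Fcal_strictAntiOn hβL hβR (by simpa) (by simpa)) le_rfl
    (fun c hc => (continuousAt_Fcal (by simpa) (by simpa) hc).tendsto.mono_left nhdsWithin_le_nhds)
    (eventually_of_mem hIoo fun t ht => ?_) (eventually_of_mem hIoo fun t ht => ?_)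
  · exact (Fcal_strictAntiOn hβL hβR (by linarith [ht.1]) (by linarith [ht.2])).antitoneOn
  · exact ⟨(hf t ht).1.le, (hf t ht).2.trans (Fcal_zero_zero hβL hβR).symm⟩

lemma hasDerivAt_of_Fcal_eq_one {βL βR : ℝ} {f : ℝ → ℝ} (hβL : 0 < βL) (hβR : 0 < βR)
    (hf : ∀ lam ∈ Ioo 0 βL, 0 < f lam ∧ Fcal βL βR lam (f lam) = 1) {lam : ℝ}
    (hlam : lam ∈ Ioo 0 βL) :
    HasDerivAt f (-FcalLamDeriv βL βR lam (f lam) / FcalEtaDeriv βL βR lam (f lam)) lam := by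
  have hR : 0 < βR + lam := by linarith [hlam.1]
  have hL : 0 < βL - lam := by linarith [hlam.2]
  refine (hasFDerivAt_Fcal hR hL (hf lam hlam).1).hasDerivAt_of_apply_eq
    (FcalEtaDeriv_neg hβL hβR hR hL (hf lam hlam).1.le).ne
    (continuousAt_of_Fcal_eq_one hβL hβR hf hlam) ?_
  filter_upwards [isOpen_Ioo.mem_nhds hlam] with t ht
  exact (hf t ht).2.trans (hf lam hlam).2.symm

section Limits

variable {α : Type*} {l : Filter α} [l.IsCountablyGenerated] {βL βR : ℝ} {lam w : α → ℝ}

lemma tendsto_FcalLamDeriv (hβL : 0 < βL) (hβR : 0 < βR) (hlam : Tendsto lam l (𝓝 0))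
    (hw : Tendsto w l (𝓝 0)) (hw0 : ∀ᶠ t in l, 0 ≤ w t) :
    Tendsto (fun t => FcalLamDeriv βL βR (lam t) (w t)) l (𝓝 (1 / βL - 1 / βR)) := by
  have hR (k : ℕ) := tendsto_moment k hβR (by simpa using hlam.const_add βR) hw hw0
  have hL (k : ℕ) := tendsto_moment k hβL (by simpa using hlam.const_sub βL) hw hw0
  have h := ((((hR 1).mul (hL 3)).sub ((hR 3).mul (hL 1))).const_mul (βL * βR)).div_const 2
  rw [moment_one_eta_zero hβR, moment_one_eta_zero hβL, moment_three_eta_zero hβR,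
    moment_three_eta_zero hβL] at h
  simp only [FcalLamDeriv, Ccal_eq_moment_one]
  convert h using 2
  field_simp

lemma tendsto_FcalEtaDeriv (hβL : 0 < βL) (hβR : 0 < βR) (hlam : Tendsto lam l (𝓝 0))
    (hw : Tendsto w l (𝓝 0)) (hw0 : ∀ᶠ t in l, 0 ≤ w t) :
    Tendsto (fun t => FcalEtaDeriv βL βR (lam t) (w t)) l
      (𝓝 (-(√(π * βL / 2) + √(π * βR / 2)))) := by
  have hR (k : ℕ) := tendsto_moment k hβR (by simpa using hlam.const_add βR) hw hw0
  have hL (k : ℕ) := tendsto_moment k hβL (by simpa using hlam.const_sub βL) hw hw0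
  have h := ((((hR 0).mul (hL 1)).add ((hR 1).mul (hL 0))).const_mul (βL * βR)).neg
  rw [moment_one_eta_zero hβR, moment_one_eta_zero hβL, moment_zero_eta_zero hβR,
    moment_zero_eta_zero hβL] at h
  simp only [FcalEtaDeriv, Ccal_eq_moment_one]
  convert h using 2
  rw [← mul_sqrt_pi_div hβL, ← mul_sqrt_pi_div hβR]
  field_simp
  ring

end Limits

theorem deriv_cgf_tendsto_conductivity_general
    (βL βR TL TR κ : ℝ) (hβL : 0 < βL)
    (hTL : TL = 1 / βL) (hTR : TR = 1 / βR)
    (hκ : κ = (Real.sqrt (Real.pi * βL / 2) + Real.sqrt (Real.pi * βR / 2))⁻¹)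
    (f : ℝ → ℝ)
    (hf : ∀ lam ∈ Set.Ioo (0 : ℝ) βL, 0 < f lam ∧ Fcal βL βR lam (f lam) = 1) :
    (∀ lam ∈ Set.Ioo (0 : ℝ) βL, DifferentiableAt ℝ f lam) ∧
      Tendsto (deriv f) (nhdsWithin 0 (Set.Ioi 0)) (nhds (κ * (TL - TR))) := by
  have hβR : 0 < βR := pos_of_Fcal_eq_one hβL.le (hf (βL / 2) ⟨by positivity, by linarith⟩).2
  have hderiv lam (hlam : lam ∈ Ioo 0 βL) := hasDerivAt_of_Fcal_eq_one hβL hβR hf hlam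
  refine ⟨fun lam hlam => (hderiv lam hlam).differentiableAt, ?_⟩
  have hIoo : Ioo 0 βL ∈ 𝓝[>] (0 : ℝ) := Ioo_mem_nhdsGT hβL
  have hlam : Tendsto id (𝓝[>] (0 : ℝ)) (𝓝 0) := nhdsWithin_le_nhds
  have hf0 := tendsto_nhdsGT_zero_of_Fcal_eq_one hβL hβR hf
  have hf0' : ∀ᶠ t in 𝓝[>] (0 : ℝ), 0 ≤ f t := eventually_of_mem hIoo fun t ht => (hf t ht).1.le
  have hlim := (tendsto_FcalLamDeriv hβL hβR hlam hf0 hf0').neg.div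
    (tendsto_FcalEtaDeriv hβL hβR hlam hf0 hf0') (neg_lt_zero.2 (by positivity)).ne
  rw [neg_div_neg_eq] at hlim
  rw [hκ, hTL, hTR, ← div_eq_inv_mul]
  exact hlim.congr' (eventually_of_mem hIoo fun t ht => (hderiv t ht).deriv.symm)

/-- If for `λ ∈ (0, β_L)`, `f(λ)` is the (unique) `η > 0` with `F(λ,η) = 1`, then `f` is
differentiable on `(0, β_L)` and `f'(λ) → κ (T_L − T_R)` as `λ ↓ 0`, where
`κ = (√(πβ_L/2) + √(πβ_R/2))⁻¹`, `T_L = 1/β_L`, `T_R = 1/β_R`. -/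
theorem deriv_cgf_tendsto_conductivity
    (βL βR TL TR κ : ℝ) (hβL : 0 < βL) (hLR : βL ≤ βR)
    (hTL : TL = 1 / βL) (hTR : TR = 1 / βR)
    (hκ : κ = (Real.sqrt (Real.pi * βL / 2) + Real.sqrt (Real.pi * βR / 2))⁻¹)
    (f : ℝ → ℝ)
    (hf : ∀ lam ∈ Set.Ioo (0 : ℝ) βL, 0 < f lam ∧ Fcal βL βR lam (f lam) = 1) :
    (∀ lam ∈ Set.Ioo (0 : ℝ) βL, DifferentiableAt ℝ f lam) ∧
      Tendsto (deriv f) (nhdsWithin 0 (Set.Ioi 0)) (nhds (κ * (TL - TR))) :=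
  deriv_cgf_tendsto_conductivity_general βL βR TL TR κ hβL hTL hTR hκ f hf
end

section
/- Let (μ_t)_{t>0} and (ν_t)_{t>0} be families of Borel probability measures on ℝ, let j ∈ ℝ and c ∈ [0, ∞). Assume that ν_t converges weakly to the Dirac measure δ_j as t → ∞ and that limsup_{t→∞} (1/t) H(ν_t | μ_t) ≤ c, where H denotes the relative entropy (Kullback–Leibler divergence). Then for every open set O ⊆ ℝ containing j, liminf_{t→∞} (1/t) log μ_t(O) ≥ −c. -/
open MeasureTheory Filter
open scoped ENNReal Classical

/-- Relative entropy (Kullback–Leibler divergence) `H(ν|μ) ∈ [0,∞]`: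
`∫ log(dν/dμ) dν` if `ν ≪ μ` (and the integrand is integrable), `+∞` otherwise. -/
noncomputable def relEnt (ν μ : Measure ℝ) : ℝ≥0∞ :=
  if ν ≪ μ ∧ Integrable (fun x => Real.log (ν.rnDeriv μ x).toReal) ν
  then ENNReal.ofReal (∫ x, Real.log (ν.rnDeriv μ x).toReal ∂ν)
  else ⊤

/-!
Jensen's inequality for the convex function `klFun x = x log x + 1 - x`, applied on `O` alone,
gives `ν(O) log (ν(O) / μ(O)) + μ(O) - ν(O) ≤ H(ν|μ)`, that is
`log μ(O) ≥ log ν(O) - H(ν|μ) / ν(O) - 1`. By the portmanteau theorem `ν_t(O) → 1`, so after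
multiplying by `1/t` the right-hand side is eventually above `-c - ε` for every `ε > 0`.
-/

open Real
open scoped Topology

namespace InformationTheory

variable {α : Type*} {mα : MeasurableSpace α} {μ ν : Measure α} [IsFiniteMeasure μ]
  [IsFiniteMeasure ν]

lemma measureReal_mul_klFun_le_toReal_klDiv (hμν : μ ≪ ν) (h_int : Integrable (llr μ ν) μ)
    (s : Set α) :
    ν.real s * klFun (μ.real s / ν.real s) ≤ (klDiv μ ν).toReal := by
  rcases eq_or_ne (ν s) 0 with hνs | hνs
  · simp [measureReal_def, hνs]
  have h_int' := (integrable_klFun_rnDeriv_iff hμν).2 h_int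
  have hjensen : klFun (⨍ x in s, (μ.rnDeriv ν x).toReal ∂ν)
      ≤ ⨍ x in s, klFun (μ.rnDeriv ν x).toReal ∂ν :=
    convexOn_klFun.map_set_average_le continuous_klFun.continuousOn isClosed_Ici hνs
      (measure_ne_top _ _) (ae_of_all _ fun _ ↦ ENNReal.toReal_nonneg)
      (Measure.integrable_toReal_rnDeriv.integrableOn) h_int'.integrableOn
  have hνs' : 0 < ν.real s := ENNReal.toReal_pos hνs (measure_ne_top _ _)
  rw [setAverage_eq, setAverage_eq, Measure.setIntegral_toReal_rnDeriv hμν, smul_eq_mul,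
    smul_eq_mul, inv_mul_eq_div, inv_mul_eq_div, le_div_iff₀' hνs'] at hjensen
  calc ν.real s * klFun (μ.real s / ν.real s)
      ≤ ∫ x in s, klFun (μ.rnDeriv ν x).toReal ∂ν := hjensen
    _ ≤ ∫ x, klFun (μ.rnDeriv ν x).toReal ∂ν :=
        setIntegral_le_integral h_int' (ae_of_all _ fun _ ↦ klFun_nonneg ENNReal.toReal_nonneg)
    _ = (klDiv μ ν).toReal := (toReal_klDiv_eq_integral_klFun hμν).symm

lemma log_measureReal_le_log_measureReal_add_toReal_klDiv (hμν : μ ≪ ν)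
    (h_int : Integrable (llr μ ν) μ) {s : Set α} (hμs : μ s ≠ 0) :
    log (μ.real s) ≤ log (ν.real s) + (klDiv μ ν).toReal / μ.real s + 1 := by
  have ha : 0 < μ.real s := ENNReal.toReal_pos hμs (measure_ne_top _ _)
  have hb : 0 < ν.real s := ENNReal.toReal_pos (fun h ↦ hμs (hμν h)) (measure_ne_top _ _)
  have h := measureReal_mul_klFun_le_toReal_klDiv hμν h_int s
  have hkl : ν.real s * klFun (μ.real s / ν.real s)
      = μ.real s * (log (μ.real s) - log (ν.real s)) + ν.real s - μ.real s := by
    rw [klFun_apply, log_div ha.ne' hb.ne']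
    field_simp
  rw [hkl] at h
  have : log (μ.real s) - log (ν.real s) ≤ (klDiv μ ν).toReal / μ.real s + 1 := by
    rw [div_add_one ha.ne', le_div_iff₀ ha]
    linarith
  linarith

lemma one_div_mul_log_measureReal_sub_le (hμν : μ ≪ ν) (h_int : Integrable (llr μ ν) μ)
    {s : Set α} (hμs : μ s ≠ 0) {t k : ℝ} (ht : 0 < t) (hk : 1 / t * (klDiv μ ν).toReal ≤ k) :
    1 / t * log (μ.real s) - k / μ.real s - 1 / t ≤ 1 / t * log (ν.real s) := by
  have ha : 0 < μ.real s := ENNReal.toReal_pos hμs (measure_ne_top _ _)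
  have hlog := log_measureReal_le_log_measureReal_add_toReal_klDiv hμν h_int hμs
  calc 1 / t * log (μ.real s) - k / μ.real s - 1 / t
      ≤ 1 / t * (log (μ.real s) - (klDiv μ ν).toReal / μ.real s - 1) := by
        have : 1 / t * (klDiv μ ν).toReal / μ.real s ≤ k / μ.real s := by gcongr
        rw [mul_sub, mul_sub, mul_one, mul_div_assoc']
        linarith
    _ ≤ 1 / t * log (ν.real s) := by gcongr; linarith

end InformationTheory

open InformationTheory

lemma relEnt_eq_klDiv (ν μ : Measure ℝ) [IsProbabilityMeasure ν] [IsProbabilityMeasure μ] :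
    relEnt ν μ = klDiv ν μ := by
  simp [relEnt, klDiv_def, llr_def]

lemma tendsto_measureReal_of_tendsto_integral_dirac {Ω ι : Type*} [MeasurableSpace Ω]
    [TopologicalSpace Ω] [OpensMeasurableSpace Ω] [HasOuterApproxClosed Ω]
    [MeasurableSingletonClass Ω] {l : Filter ι} {ν : ι → Measure Ω}
    [∀ i, IsProbabilityMeasure (ν i)] {ω : Ω}
    (h : ∀ g : BoundedContinuousFunction Ω ℝ, Tendsto (fun i ↦ ∫ x, g x ∂ν i) l (nhds (g ω)))
    {O : Set Ω} (hO : IsOpen O) (hωO : ω ∈ O) :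
    Tendsto (fun i ↦ (ν i).real O) l (nhds 1) := by
  let P : ι → ProbabilityMeasure Ω := fun i ↦ ⟨ν i, inferInstance⟩
  have hP : Tendsto P l (nhds ⟨Measure.dirac ω, inferInstance⟩) :=
    ProbabilityMeasure.tendsto_iff_forall_integral_tendsto.2 fun g ↦ by
      simpa [P, integral_dirac] using h g
  have hlim : 1 ≤ liminf (fun i ↦ ν i O) l := by
    simpa [P, hωO] using ProbabilityMeasure.le_liminf_measure_open_of_tendsto hP hO
  have hνO : Tendsto (fun i ↦ ν i O) l (nhds 1) :=
    tendsto_order.2 ⟨fun a ha ↦ eventually_lt_of_lt_liminf (ha.trans_le hlim),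
      fun a ha ↦ Eventually.of_forall fun i ↦ prob_le_one.trans_lt ha⟩
  exact (ENNReal.tendsto_toReal ENNReal.one_ne_top).comp hνO

lemma eventually_ne_top_and_mul_toReal_lt_of_limsup_le {D : ℝ → ℝ≥0∞} {c s : ℝ} (hc : 0 ≤ c)
    (h : limsup (fun t ↦ ENNReal.ofReal (1 / t) * D t) atTop ≤ ENNReal.ofReal c) (hcs : c < s) :
    ∀ᶠ t in atTop, D t ≠ ∞ ∧ 1 / t * (D t).toReal < s := by
  have hlt : limsup (fun t ↦ ENNReal.ofReal (1 / t) * D t) atTop < ENNReal.ofReal s :=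
    h.trans_lt ((ENNReal.ofReal_lt_ofReal_iff_of_nonneg hc).2 hcs)
  filter_upwards [eventually_lt_of_limsup_lt hlt, eventually_gt_atTop 0] with t ht ht0
  have hDt : D t ≠ ∞ := by
    rintro hDt
    simp [hDt, ENNReal.mul_top, ht0] at ht
  refine ⟨hDt, ?_⟩
  rw [← ENNReal.toReal_ofReal (one_div_pos.2 ht0).le, ← ENNReal.toReal_mul]
  exact (ENNReal.toReal_lt_toReal (ENNReal.mul_ne_top ENNReal.ofReal_ne_top hDt)
    ENNReal.ofReal_ne_top).2 ht |>.trans_eq (ENNReal.toReal_ofReal (hc.trans hcs.le))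

lemma tendsto_one_div_mul_log_sub_div_sub_one_div {a : ℝ → ℝ} (ha : Tendsto a atTop (𝓝 1))
    (k : ℝ) : Tendsto (fun t ↦ 1 / t * log (a t) - k / a t - 1 / t) atTop (𝓝 (-k)) := by
  have h1t : Tendsto (fun t : ℝ ↦ 1 / t) atTop (𝓝 0) := by
    simpa only [one_div] using tendsto_inv_atTop_zero
  have hlog : Tendsto (fun t ↦ log (a t)) atTop (𝓝 0) := by
    simpa [Function.comp_def] using (continuousAt_log one_ne_zero).tendsto.comp ha
  simpa using ((h1t.mul hlog).sub (tendsto_const_nhds.div ha one_ne_zero)).sub h1t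

/-- If `ν_t ⇀ δ_j` weakly and `limsup (1/t) H(ν_t|μ_t) ≤ c`, then for every open set `O`
containing `j`, `liminf (1/t) log μ_t(O) ≥ −c`. -/
theorem liminf_log_measure_ge_of_relEnt
    (μt νt : ℝ → Measure ℝ)
    (hμ : ∀ t, IsProbabilityMeasure (μt t)) (hν : ∀ t, IsProbabilityMeasure (νt t))
    (j c : ℝ) (hc : 0 ≤ c)
    (hweak : ∀ g : BoundedContinuousFunction ℝ ℝ,
      Tendsto (fun t : ℝ => ∫ x, g x ∂(νt t)) atTop (nhds (g j)))
    (hent : Filter.limsup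
        (fun t : ℝ => ENNReal.ofReal (1 / t) * relEnt (νt t) (μt t)) atTop
      ≤ ENNReal.ofReal c) :
    ∀ O : Set ℝ, IsOpen O → j ∈ O →
      (-(c : EReal)) ≤
        Filter.liminf (fun t : ℝ => ((1 / t : ℝ) : EReal) * ENNReal.log (μt t O)) atTop := by
  intro O hO hjO
  have hνO := tendsto_measureReal_of_tendsto_integral_dirac hweak hO hjO
  simp only [relEnt_eq_klDiv] at hent
  refine le_of_forall_lt_imp_le_of_dense fun y hy ↦ ?_
  obtain ⟨r, hyr, hrc⟩ := EReal.lt_iff_exists_real_btwn.1 hy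
  obtain ⟨s, hcs, hsr⟩ : ∃ s, c < s ∧ s < -r :=
    exists_between (by linarith [EReal.coe_lt_coe_iff.1 (hrc.trans_eq (EReal.coe_neg c).symm)])
  refine le_liminf_of_le (by isBoundedDefault) ?_
  filter_upwards [eventually_ne_top_and_mul_toReal_lt_of_limsup_le hc hent hcs,
    (tendsto_one_div_mul_log_sub_div_sub_one_div hνO s).eventually
      (eventually_gt_nhds (by linarith)),
    hνO.eventually (eventually_gt_nhds zero_lt_one), eventually_gt_atTop 0]
    with t ⟨hKfin, hK⟩ hF ha ht
  obtain ⟨hac, hint⟩ := klDiv_ne_top_iff.1 hKfin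
  have hνO0 : νt t O ≠ 0 := fun h ↦ by simp [measureReal_def, h] at ha
  have hr := hF.le.trans (one_div_mul_log_measureReal_sub_le hac hint hνO0 ht hK.le)
  rw [ENNReal.log_pos_real (fun h ↦ hνO0 (hac h)) (measure_ne_top _ _), ← EReal.coe_mul]
  exact hyr.le.trans (EReal.coe_le_coe_iff.2 hr)
end
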